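/- Let C be a first-order clause without equality that is blocked by some literal L in the formula F (every L-resolvent of C with a clause of F \ {C} is valid). Then C is redundant with respect to F: F \ {C} is satisfiable if and only if F ∪ {C} is satisfiable. -/

import Mathlib

/-- First-order terms over variables `V` and function symbols `Fn`. -/
inductive Term (V Fn : Type) : Type
  | var : V → Term V Fn
  | app : Fn → List (Term V Fn) → Term V Fn

/-- A substitution maps variables to terms. -/
abbrev Subst (V Fn : Type) := V → Term V Fn

/-- Applying a substitution to a term. -/
def Term.subst {V Fn : Type} (σ : Subst V Fn) : Term V Fn → Term V Fn
  | .var v => σ v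
  | .app f ts => .app f (ts.attach.map (fun t => Term.subst σ t.1))
  decreasing_by have := List.sizeOf_lt_of_mem t.2; simp at *; omega

/-- The set of variables occurring in a term. -/
def Term.vars {V Fn : Type} : Term V Fn → Set V
  | .var v => {v}
  | .app _ ts => {x | ∃ t ∈ ts.attach, x ∈ Term.vars t.1}
  decreasing_by have := List.sizeOf_lt_of_mem t.2; simp at *; omega

/-- A term is ground if it contains no variables. -/
def Term.IsGround {V Fn : Type} (t : Term V Fn) : Prop := t.vars = ∅

/-- Composition of substitutions: `σ.comp γ` is "first σ, then γ". -/
def Subst.comp {V Fn : Type} (σ γ : Subst V Fn) : Subst V Fn :=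
  fun v => (σ v).subst γ

/-- An atom: a predicate symbol applied to a list of argument terms. -/
structure Atom (V Fn P : Type) where
  pred : P
  args : List (Term V Fn)

/-- A literal: an atom with a polarity (`true` = positive). -/
structure Lit (V Fn P : Type) where
  pol : Bool
  atom : Atom V Fn P

/-- The complement of a literal. -/
def Lit.compl {V Fn P : Type} (l : Lit V Fn P) : Lit V Fn P := ⟨!l.pol, l.atom⟩

def Atom.subst {V Fn P : Type} (σ : Subst V Fn) (A : Atom V Fn P) : Atom V Fn P :=
  ⟨A.pred, A.args.map (Term.subst σ)⟩

def Lit.subst {V Fn P : Type} (σ : Subst V Fn) (l : Lit V Fn P) : Lit V Fn P :=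
  ⟨l.pol, l.atom.subst σ⟩

/-- A clause is a multiset (disjunction) of literals. -/
abbrev Clause (V Fn P : Type) := Multiset (Lit V Fn P)

def Clause.subst {V Fn P : Type} (σ : Subst V Fn) (C : Clause V Fn P) : Clause V Fn P :=
  C.map (Lit.subst σ)

def Atom.vars {V Fn P : Type} (A : Atom V Fn P) : Set V := {x | ∃ t ∈ A.args, x ∈ t.vars}
def Lit.vars {V Fn P : Type} (l : Lit V Fn P) : Set V := l.atom.vars
def Clause.vars {V Fn P : Type} (C : Clause V Fn P) : Set V := {x | ∃ l ∈ C, x ∈ l.vars}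

/-- A clause is ground if it contains no variables. -/
def Clause.IsGround {V Fn P : Type} (C : Clause V Fn P) : Prop := C.vars = ∅

/-- A substitution `σ` unifies a list of literals if it maps them all to the same literal. -/
def IsUnifier {V Fn P : Type} (σ : Subst V Fn) (ls : List (Lit V Fn P)) : Prop :=
  ∀ l₁ ∈ ls, ∀ l₂ ∈ ls, l₁.subst σ = l₂.subst σ

/-- A most general unifier: every unifier factors through it. -/
def IsMGU {V Fn P : Type} (σ : Subst V Fn) (ls : List (Lit V Fn P)) : Prop :=
  IsUnifier σ ls ∧ ∀ τ, IsUnifier τ ls → ∃ γ, σ.comp γ = τ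

/-- Validity of an equality-free clause: it contains a complementary pair of literals. -/
def Clause.ValidEF {V Fn P : Type} (C : Clause V Fn P) : Prop :=
  ∃ A : Atom V Fn P, (⟨true, A⟩ : Lit V Fn P) ∈ C ∧ (⟨false, A⟩ : Lit V Fn P) ∈ C

/-- `C` (written as `L ∨ C'`) is blocked by `L` in `F`: all `L`-resolvents with clauses
of `F \ {L ∨ C'}` are valid. -/
def BlockedEF {V Fn P : Type} (L : Lit V Fn P) (C' : Clause V Fn P)
    (F : Set (Clause V Fn P)) : Prop :=
  ∀ D ∈ F, D ≠ L ::ₘ C' → ∀ Ns Drest : Clause V Fn P, Ns + Drest = D → Ns ≠ 0 →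
    ∀ σ : Subst V Fn, IsMGU σ (L :: (Ns.map Lit.compl).toList) →
      Clause.ValidEF (C'.subst σ + Drest.subst σ)

/-- A propositional assignment on (ground) atoms. -/
abbrev PAssign (V Fn P : Type) := Atom V Fn P → Bool

def litTrue {V Fn P : Type} (α : PAssign V Fn P) (l : Lit V Fn P) : Prop :=
  α l.atom = l.pol

/-- Propositional satisfaction of a (ground) clause. -/
def satC {V Fn P : Type} (α : PAssign V Fn P) (C : Clause V Fn P) : Prop :=
  ∃ l ∈ C, litTrue α l

/-- A first-order interpretation. -/
structure Interp (Fn P : Type) : Type 1 where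
  dom : Type
  nonempty : Nonempty dom
  fn : Fn → List dom → dom
  pr : P → List dom → Prop

def Term.eval {V Fn P : Type} (I : Interp Fn P) (ρ : V → I.dom) : Term V Fn → I.dom
  | .var v => ρ v
  | .app f ts => I.fn f (ts.attach.map (fun t => Term.eval I ρ t.1))
  decreasing_by have := List.sizeOf_lt_of_mem t.2; simp at *; omega

def litHolds {V Fn P : Type} (I : Interp Fn P) (ρ : V → I.dom) (l : Lit V Fn P) : Prop :=
  l.pol = true ↔ I.pr l.atom.pred (l.atom.args.map (Term.eval I ρ))

def clauseHolds {V Fn P : Type} (I : Interp Fn P) (ρ : V → I.dom) (C : Clause V Fn P) : Prop :=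
  ∃ l ∈ C, litHolds I ρ l

/-- First-order satisfiability of a CNF formula (clauses implicitly universally quantified). -/
def SatEF {V Fn P : Type} (F : Set (Clause V Fn P)) : Prop :=
  ∃ I : Interp Fn P, ∀ C ∈ F, ∀ ρ : V → I.dom, clauseHolds I ρ C


/-!
A model of `F \ {C}`, where `C = L ∨ C'`, yields a propositional assignment under which every
instance of every clause of `F \ {C}` is true, and such an assignment for `F ∪ {C}` yields a
Herbrand model. By Zorn's lemma there is a maximal set `M` of atoms that can be switched to the
polarity of `L` while all instances of `F \ {C}` stay true. Then every instance `Cθ` is true: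
otherwise the atom of `Lθ` could be added to `M`. Indeed, an instance `Dγ` made false by this
switch contains `¬Lθ`. As `C` and `D` share no variables, `L` and the complements of the literals
`N` of `D` with `Nγ = ¬Lθ` have a common unifier, hence a most general one (Robinson), and
blockedness makes the corresponding `L`-resolvent valid. Its instance `C'θ ∨ (D \ N)γ` is valid
and does not contain `¬Lθ` (else `Cθ` would be valid), so it has a complementary pair avoiding the
atom of `Lθ`; the true literal of that pair cannot lie in the false clause `Cθ`, so it is a true
literal of `Dγ`.
-/

namespace Term

variable {V Fn : Type}

@[elab_as_elim]
theorem induction_on' {motive : Term V Fn → Prop} (t : Term V Fn)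
    (var : ∀ v, motive (.var v))
    (app : ∀ f ts, (∀ t ∈ ts, motive t) → motive (.app f ts)) : motive t :=
  match t with
  | .var v => var v
  | .app f ts => app f ts fun t _ => induction_on' t var app
decreasing_by have := List.sizeOf_lt_of_mem ‹t ∈ ts›; simp; omega

@[simp] theorem subst_var (σ : Subst V Fn) (v : V) : (var v).subst σ = σ v := by
  rw [subst]

@[simp] theorem subst_app (σ : Subst V Fn) (f : Fn) (ts : List (Term V Fn)) :
    (app f ts).subst σ = .app f (ts.map (subst σ)) := by
  rw [subst]; simp

@[simp] theorem vars_var (v : V) : (var v : Term V Fn).vars = {v} := by rw [vars]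

@[simp] theorem mem_vars_app {x : V} {f : Fn} {ts : List (Term V Fn)} :
    x ∈ (app f ts).vars ↔ ∃ t ∈ ts, x ∈ t.vars := by
  rw [vars]; simp

theorem subst_subst (σ δ : Subst V Fn) (t : Term V Fn) :
    (t.subst σ).subst δ = t.subst (σ.comp δ) := by
  induction t using induction_on' with
  | var v => simp [Subst.comp]
  | app f ts ih => simpa using List.map_congr_left ih

theorem subst_congr {σ τ : Subst V Fn} {t : Term V Fn} (h : ∀ v ∈ t.vars, σ v = τ v) :
    t.subst σ = t.subst τ := by
  induction t using induction_on' with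
  | var v => simpa using h v
  | app f ts ih =>
    simpa using List.map_congr_left fun u hu =>
      ih u hu fun v hv => h v (mem_vars_app.2 ⟨u, hu, hv⟩)

@[simp] theorem subst_id (t : Term V Fn) : t.subst var = t := by
  induction t using induction_on' with
  | var v => simp
  | app f ts ih => simpa using List.map_congr_left ih

theorem vars_finite (t : Term V Fn) : t.vars.Finite := by
  induction t using induction_on' with
  | var v => simp
  | app f ts ih =>
    convert ts.finite_toSet.biUnion ih using 1
    ext; simp

theorem vars_subst_subset (σ : Subst V Fn) (t : Term V Fn) :
    (t.subst σ).vars ⊆ ⋃ v ∈ t.vars, (σ v).vars := by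
  induction t using induction_on' with
  | var v => simp
  | app f ts ih =>
    intro x hx
    obtain ⟨u, hu, hxu⟩ := by simpa using hx
    obtain ⟨v, hv, hxv⟩ := Set.mem_iUnion₂.1 (ih u hu hxu)
    exact Set.mem_iUnion₂.2 ⟨v, mem_vars_app.2 ⟨u, hu, hv⟩, hxv⟩

theorem sizeOf_lt_sizeOf_subst {x : V} {t : Term V Fn} (σ : Subst V Fn) (hx : x ∈ t.vars)
    (ht : t ≠ var x) : sizeOf (σ x) < sizeOf (t.subst σ) := by
  induction t using induction_on' with
  | var v => simp_all
  | app f ts ih =>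
    obtain ⟨u, hu, hxu⟩ := mem_vars_app.1 hx
    have hlt : sizeOf (u.subst σ) < sizeOf ((app f ts).subst σ) := by
      have := List.sizeOf_lt_of_mem (List.mem_map_of_mem (f := subst σ) hu)
      simp; omega
    by_cases hux : u = var x
    · subst hux; simpa using hlt
    · exact (ih u hu hxu hux).trans hlt

theorem notMem_vars_of_apply_eq_subst {x : V} {t : Term V Fn} {θ : Subst V Fn}
    (ht : t ≠ var x) (hθ : θ x = t.subst θ) : x ∉ t.vars := fun hx =>
  (sizeOf_lt_sizeOf_subst θ hx ht).ne (congrArg sizeOf hθ)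

end Term

section Substitution

variable {V Fn : Type}

theorem Subst.comp_assoc (a b c : Subst V Fn) : (a.comp b).comp c = a.comp (b.comp c) := by
  funext v; simp [Subst.comp, Term.subst_subst]

variable [DecidableEq V]

def Subst.single (x : V) (t : Term V Fn) : Subst V Fn :=
  Function.update Term.var x t

@[simp] theorem Subst.single_self (x : V) (t : Term V Fn) : Subst.single x t x = t := by
  simp [Subst.single]

@[simp] theorem Subst.single_of_ne {x v : V} (t : Term V Fn) (h : v ≠ x) :
    Subst.single x t v = .var v := by
  simp [Subst.single, h]

theorem Subst.single_comp_of_apply_eq {x : V} {t : Term V Fn} {τ : Subst V Fn}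
    (h : τ x = t.subst τ) : (Subst.single x t).comp τ = τ := by
  funext v
  by_cases hv : v = x
  · subst hv; simp [Subst.comp, h]
  · simp [Subst.comp, hv]

theorem Term.vars_subst_single_subset (x : V) (t u : Term V Fn) :
    (u.subst (Subst.single x t)).vars ⊆ (u.vars \ {x}) ∪ t.vars := by
  intro y hy
  obtain ⟨v, hv, hyv⟩ := Set.mem_iUnion₂.1 (u.vars_subst_subset _ hy)
  by_cases hvx : v = x
  · subst hvx; simp_all
  · simp_all

end Substitution

theorem List.map_eq_map_iff_zip {α β : Type*} {f : α → β} {l₁ l₂ : List α} :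
    l₁.map f = l₂.map f ↔ l₁.length = l₂.length ∧ ∀ p ∈ l₁.zip l₂, f p.1 = f p.2 := by
  rw [← forall₂_eq_eq_eq, forall₂_map_left_iff, forall₂_map_right_iff, forall₂_iff_zip]
  simp

section Unification

variable {V Fn : Type}

def IsEqnUnifier (σ : Subst V Fn) (E : List (Term V Fn × Term V Fn)) : Prop :=
  ∀ p ∈ E, p.1.subst σ = p.2.subst σ

def IsEqnMGU (σ : Subst V Fn) (E : List (Term V Fn × Term V Fn)) : Prop :=
  IsEqnUnifier σ E ∧ ∀ τ, IsEqnUnifier τ E → ∃ γ, σ.comp γ = τ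

def eqnVars (E : List (Term V Fn × Term V Fn)) : Set V :=
  ⋃ p ∈ E, p.1.vars ∪ p.2.vars

def substEqns (σ : Subst V Fn) (E : List (Term V Fn × Term V Fn)) :
    List (Term V Fn × Term V Fn) :=
  E.map (Prod.map (Term.subst σ) (Term.subst σ))

@[simp] theorem eqnVars_cons (p : Term V Fn × Term V Fn) (E : List (Term V Fn × Term V Fn)) :
    eqnVars (p :: E) = p.1.vars ∪ p.2.vars ∪ eqnVars E := by
  simp [eqnVars]

theorem vars_subset_eqnVars {p : Term V Fn × Term V Fn} {E : List (Term V Fn × Term V Fn)}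
    (hp : p ∈ E) : p.1.vars ∪ p.2.vars ⊆ eqnVars E := fun y hy => by
  simp only [eqnVars, Set.mem_iUnion]
  exact ⟨p, hp, hy⟩

theorem eqnVars_finite (E : List (Term V Fn × Term V Fn)) : (eqnVars E).Finite :=
  E.finite_toSet.biUnion fun p _ => p.1.vars_finite.union p.2.vars_finite

@[simp] theorem isEqnUnifier_cons {σ : Subst V Fn} {p : Term V Fn × Term V Fn}
    {E : List (Term V Fn × Term V Fn)} :
    IsEqnUnifier σ (p :: E) ↔ p.1.subst σ = p.2.subst σ ∧ IsEqnUnifier σ E :=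
  List.forall_mem_cons

theorem isEqnUnifier_swap_iff (s t : Term V Fn) (τ : Subst V Fn)
    (E : List (Term V Fn × Term V Fn)) :
    IsEqnUnifier τ ((s, t) :: E) ↔ IsEqnUnifier τ ((t, s) :: E) := by
  simp [eq_comm]

theorem isEqnUnifier_substEqns_iff (σ τ : Subst V Fn) (E : List (Term V Fn × Term V Fn)) :
    IsEqnUnifier τ (substEqns σ E) ↔ IsEqnUnifier (σ.comp τ) E := by
  simp only [IsEqnUnifier, substEqns, List.forall_mem_map, Prod.map_fst, Prod.map_snd,
    Term.subst_subst]

theorem isEqnUnifier_app_cons_iff (f : Fn) {ss ts : List (Term V Fn)}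
    (h : ss.length = ts.length) (τ : Subst V Fn) (E : List (Term V Fn × Term V Fn)) :
    IsEqnUnifier τ ((.app f ss, .app f ts) :: E) ↔ IsEqnUnifier τ (ss.zip ts ++ E) := by
  simp [IsEqnUnifier, List.map_eq_map_iff_zip, h, or_imp, forall_and]

theorem isEqnMGU_nil : IsEqnMGU (Term.var : Subst V Fn) [] :=
  ⟨by simp [IsEqnUnifier], fun τ _ => ⟨τ, by funext; simp [Subst.comp]⟩⟩

theorem IsEqnMGU.of_unifier_iff {σ : Subst V Fn} {E E' : List (Term V Fn × Term V Fn)}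
    (h : IsEqnMGU σ E') (hE : ∀ τ, IsEqnUnifier τ E ↔ IsEqnUnifier τ E') : IsEqnMGU σ E :=
  ⟨(hE σ).2 h.1, fun τ hτ => h.2 τ ((hE τ).1 hτ)⟩

theorem eqnVars_zip_append_subset (f g : Fn) (ss ts : List (Term V Fn))
    (E : List (Term V Fn × Term V Fn)) :
    eqnVars (ss.zip ts ++ E) ⊆ eqnVars ((.app f ss, .app g ts) :: E) := by
  intro y hy
  obtain ⟨p, hp, hyp⟩ : ∃ p ∈ ss.zip ts ++ E, y ∈ p.1.vars ∪ p.2.vars := by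
    simpa [eqnVars] using hy
  rw [eqnVars_cons]
  rcases List.mem_append.1 hp with hp | hp
  · obtain ⟨h1, h2⟩ := List.of_mem_zip hp
    refine Or.inl (Set.union_subset_union (fun y hy => ?_) (fun y hy => ?_) hyp)
    · exact Term.mem_vars_app.2 ⟨_, h1, hy⟩
    · exact Term.mem_vars_app.2 ⟨_, h2, hy⟩
  · exact Or.inr (vars_subset_eqnVars hp hyp)

theorem sizeOf_zip_append_lt (ss ts : List (Term V Fn)) (E : List (Term V Fn × Term V Fn)) :
    sizeOf (ss.zip ts ++ E) < sizeOf ss + sizeOf ts + sizeOf E := by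
  induction ss generalizing ts with
  | nil => simp
  | cons s ss ih =>
    cases ts with
    | nil => simp
    | cons t ts => have := ih ts; simp; omega

variable [DecidableEq V]

theorem eqnVars_substEqns_single_subset {x : V} {t : Term V Fn} (hx : x ∉ t.vars)
    (E : List (Term V Fn × Term V Fn)) :
    eqnVars (substEqns (Subst.single x t) E) ⊆ eqnVars ((Term.var x, t) :: E) \ {x} := by
  intro y hy
  obtain ⟨q, hq, hyq⟩ : ∃ q ∈ substEqns (Subst.single x t) E, y ∈ q.1.vars ∪ q.2.vars := by
    simpa [eqnVars] using hy
  obtain ⟨p, hp, rfl⟩ := List.mem_map.1 hq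
  have hyp : y ∈ (p.1.vars ∪ p.2.vars) \ {x} ∪ t.vars := by
    rcases hyq with h | h <;> rcases Term.vars_subst_single_subset x t _ h with h | h <;>
      simp_all
  rcases hyp with h | h
  · exact ⟨by simp [vars_subset_eqnVars hp h.1], h.2⟩
  · exact ⟨by simp [h], fun hyx => hx (hyx ▸ h)⟩

theorem eqnVars_substEqns_single_ncard_lt {x : V} {t : Term V Fn} (hx : x ∉ t.vars)
    (E : List (Term V Fn × Term V Fn)) :
    (eqnVars (substEqns (Subst.single x t) E)).ncard < (eqnVars ((Term.var x, t) :: E)).ncard :=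
  calc (eqnVars (substEqns (Subst.single x t) E)).ncard
      ≤ (eqnVars ((Term.var x, t) :: E) \ {x}).ncard :=
        Set.ncard_le_ncard (eqnVars_substEqns_single_subset hx E) (eqnVars_finite _).sdiff
    _ < _ := Set.ncard_sdiff_singleton_lt_of_mem (by simp) (eqnVars_finite _)

theorem IsEqnUnifier.substEqns_single {x : V} {t : Term V Fn} {θ : Subst V Fn}
    {E : List (Term V Fn × Term V Fn)} (hx : θ x = t.subst θ) (hE : IsEqnUnifier θ E) :
    IsEqnUnifier θ (substEqns (Subst.single x t) E) := by
  rwa [isEqnUnifier_substEqns_iff, Subst.single_comp_of_apply_eq hx]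

theorem IsEqnMGU.var_cons {x : V} {t : Term V Fn} {E : List (Term V Fn × Term V Fn)}
    {σ : Subst V Fn} (hx : x ∉ t.vars) (hσ : IsEqnMGU σ (substEqns (Subst.single x t) E)) :
    IsEqnMGU ((Subst.single x t).comp σ) ((Term.var x, t) :: E) := by
  have ht : t.subst (Subst.single x t) = t := by
    conv_rhs => rw [← t.subst_id]
    exact Term.subst_congr fun v hv => by simp [ne_of_mem_of_not_mem hv hx]
  refine ⟨?_, fun τ hτ => ?_⟩
  · rw [isEqnUnifier_cons, ← isEqnUnifier_substEqns_iff]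
    simp only [Term.subst_var, ← Term.subst_subst, ht]
    simpa [Subst.comp] using hσ.1
  · rw [isEqnUnifier_cons, Term.subst_var] at hτ
    obtain ⟨γ, hγ⟩ := hσ.2 τ (hτ.2.substEqns_single hτ.1)
    exact ⟨γ, by rw [Subst.comp_assoc, hγ, Subst.single_comp_of_apply_eq hτ.1]⟩

theorem exists_isEqnMGU (E : List (Term V Fn × Term V Fn)) (h : ∃ θ, IsEqnUnifier θ E) :
    ∃ σ, IsEqnMGU σ E :=
  match E, h with
  | [], _ => ⟨_, isEqnMGU_nil⟩
  | (.var x, t) :: E, ⟨θ, hθ⟩ => by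
    rw [isEqnUnifier_cons, Term.subst_var] at hθ
    by_cases htx : t = .var x
    · subst htx
      obtain ⟨σ, hσ⟩ := exists_isEqnMGU E ⟨θ, hθ.2⟩
      exact ⟨σ, hσ.of_unifier_iff fun τ => by simp⟩
    · have hx := Term.notMem_vars_of_apply_eq_subst htx hθ.1
      obtain ⟨σ, hσ⟩ :=
        exists_isEqnMGU (substEqns (Subst.single x t) E) ⟨θ, hθ.2.substEqns_single hθ.1⟩
      exact ⟨_, hσ.var_cons hx⟩
  | (.app f ss, .var x) :: E, ⟨θ, hθ⟩ => by
    rw [isEqnUnifier_cons, Term.subst_var] at hθ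
    have hx := Term.notMem_vars_of_apply_eq_subst (by simp) hθ.1.symm
    obtain ⟨σ, hσ⟩ := exists_isEqnMGU (substEqns (Subst.single x (.app f ss)) E)
      ⟨θ, hθ.2.substEqns_single hθ.1.symm⟩
    exact ⟨_, (hσ.var_cons hx).of_unifier_iff (isEqnUnifier_swap_iff _ _ · E)⟩
  | (.app f ss, .app g ts) :: E, ⟨θ, hθ⟩ => by
    rw [isEqnUnifier_cons, Term.subst_app, Term.subst_app, Term.app.injEq] at hθ
    obtain ⟨⟨rfl, hargs⟩, hE⟩ := hθ
    have hlen : ss.length = ts.length := by simpa using congrArg List.length hargs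
    obtain ⟨σ, hσ⟩ := exists_isEqnMGU (ss.zip ts ++ E)
      ⟨θ, (isEqnUnifier_app_cons_iff f hlen θ E).1 (by simp [hargs, hE])⟩
    exact ⟨σ, hσ.of_unifier_iff (isEqnUnifier_app_cons_iff f hlen · E)⟩
-- eliminating a variable lowers the number of variables, the other steps lower the size
-- without adding variables
termination_by ((eqnVars E).ncard, sizeOf E)
decreasing_by
  · exact Prod.Lex.right' _ (Set.ncard_le_ncard (by simp) (eqnVars_finite _)) (by simp)
  · exact Prod.Lex.left _ _ (eqnVars_substEqns_single_ncard_lt hx E)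
  · refine Prod.Lex.left _ _ ?_
    simpa [Set.union_comm] using eqnVars_substEqns_single_ncard_lt hx E
  · exact Prod.Lex.right' _
      (Set.ncard_le_ncard (eqnVars_zip_append_subset f g ss ts E) (eqnVars_finite _))
      (by have := sizeOf_zip_append_lt ss ts E; simp; omega)

end Unification

section LiteralUnification

variable {V Fn P : Type}

theorem Lit.subst_eq_subst_iff {σ : Subst V Fn} {l l' : Lit V Fn P} :
    l.subst σ = l'.subst σ ↔
      (l.pol = l'.pol ∧ l.atom.pred = l'.atom.pred ∧ l.atom.args.length = l'.atom.args.length) ∧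
        IsEqnUnifier σ (l.atom.args.zip l'.atom.args) := by
  simp [Lit.subst, Atom.subst, Lit.mk.injEq, Atom.mk.injEq, List.map_eq_map_iff_zip,
    IsEqnUnifier, and_assoc]

theorem isUnifier_cons_iff {σ : Subst V Fn} {l : Lit V Fn P} {ls : List (Lit V Fn P)} :
    IsUnifier σ (l :: ls) ↔ ∀ l' ∈ ls, l.subst σ = l'.subst σ := by
  refine ⟨fun h l' hl' => h l (by simp) l' (by simp [hl']), fun h l₁ h₁ l₂ h₂ => ?_⟩
  have head_eq : ∀ l' ∈ l :: ls, l'.subst σ = l.subst σ := by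
    rintro l' (_ | ⟨_, hl'⟩)
    exacts [rfl, (h l' hl').symm]
  rw [head_eq l₁ h₁, head_eq l₂ h₂]

theorem exists_isEqnUnifier_iff_isUnifier {θ : Subst V Fn} :
    ∀ {ls : List (Lit V Fn P)}, IsUnifier θ ls →
      ∃ E, ∀ σ : Subst V Fn, IsUnifier σ ls ↔ IsEqnUnifier σ E
  | [], _ => ⟨[], by simp [IsUnifier, IsEqnUnifier]⟩
  | l :: ls, hθ => by
    refine ⟨ls.flatMap fun l' => l.atom.args.zip l'.atom.args, fun σ => ?_⟩
    have shape := fun l' hl' => (Lit.subst_eq_subst_iff.1 (isUnifier_cons_iff.1 hθ l' hl')).1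
    have flat : IsEqnUnifier σ (ls.flatMap fun l' => l.atom.args.zip l'.atom.args) ↔
        ∀ l' ∈ ls, IsEqnUnifier σ (l.atom.args.zip l'.atom.args) := by
      simp only [IsEqnUnifier, List.mem_flatMap]
      exact ⟨fun h l' hl' p hp => h p ⟨l', hl', hp⟩, fun h p ⟨l', hl', hp⟩ => h l' hl' p hp⟩
    simp only [isUnifier_cons_iff, Lit.subst_eq_subst_iff, flat]
    exact ⟨fun h l' hl' => (h l' hl').2, fun h l' hl' => ⟨shape l' hl', h l' hl'⟩⟩

theorem exists_isMGU [DecidableEq V] {θ : Subst V Fn} {ls : List (Lit V Fn P)}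
    (hθ : IsUnifier θ ls) : ∃ σ, IsMGU σ ls := by
  obtain ⟨E, hE⟩ := exists_isEqnUnifier_iff_isUnifier hθ
  obtain ⟨σ, hσ⟩ := exists_isEqnMGU E ⟨θ, (hE θ).1 hθ⟩
  exact ⟨σ, (hE σ).2 hσ.1, fun τ hτ => hσ.2 τ ((hE τ).1 hτ)⟩

end LiteralUnification

section Semantics

variable {V Fn P : Type}

def InstancesSat (α : PAssign V Fn P) (G : Set (Clause V Fn P)) : Prop :=
  ∀ D ∈ G, ∀ γ : Subst V Fn, satC α (D.subst γ)

@[simp] theorem Term.eval_var (I : Interp Fn P) (ρ : V → I.dom) (v : V) :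
    (Term.var v : Term V Fn).eval I ρ = ρ v := by
  rw [Term.eval]

@[simp] theorem Term.eval_app (I : Interp Fn P) (ρ : V → I.dom) (f : Fn)
    (ts : List (Term V Fn)) : (Term.app f ts).eval I ρ = I.fn f (ts.map (Term.eval I ρ)) := by
  rw [Term.eval]; simp

theorem Term.eval_subst (I : Interp Fn P) (ρ : V → I.dom) (σ : Subst V Fn) (t : Term V Fn) :
    (t.subst σ).eval I ρ = t.eval I (fun v => (σ v).eval I ρ) := by
  induction t using Term.induction_on' with
  | var v => simp
  | app f ts ih =>
    simp only [Term.subst_app, Term.eval_app, List.map_map]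
    exact congrArg _ (List.map_congr_left ih)

open Classical in
noncomputable def Interp.assignment (I : Interp Fn P) (ρ : V → I.dom) : PAssign V Fn P :=
  fun A => decide (I.pr A.pred (A.args.map (Term.eval I ρ)))

open Classical in
theorem litTrue_assignment_subst_iff (I : Interp Fn P) (ρ : V → I.dom) (θ : Subst V Fn)
    (l : Lit V Fn P) :
    litTrue (I.assignment ρ) (l.subst θ) ↔ litHolds I (fun v => (θ v).eval I ρ) l := by
  have args_eq : (l.subst θ).atom.args.map (Term.eval I ρ) =
      l.atom.args.map (Term.eval I fun v => (θ v).eval I ρ) := by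
    simp [Lit.subst, Atom.subst, Function.comp_def, Term.eval_subst]
  unfold litTrue litHolds Interp.assignment
  rw [← args_eq]
  change decide (I.pr l.atom.pred _) = l.pol ↔ _
  cases l.pol <;> simp

theorem SatEF.exists_instancesSat {G : Set (Clause V Fn P)} (h : SatEF G) :
    ∃ α : PAssign V Fn P, InstancesSat α G := by
  obtain ⟨I, hI⟩ := h
  obtain ⟨d⟩ := I.nonempty
  refine ⟨I.assignment fun _ => d, fun D hD θ => ?_⟩
  obtain ⟨l, hl, hlt⟩ := hI D hD _
  exact ⟨l.subst θ, Multiset.mem_map_of_mem _ hl, (litTrue_assignment_subst_iff I _ θ l).2 hlt⟩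

abbrev Interp.herbrand [h : Nonempty (Term V Fn)] (α : PAssign V Fn P) : Interp Fn P where
  dom := Term V Fn
  nonempty := h
  fn := .app
  pr p ts := α ⟨p, ts⟩ = true

theorem litHolds_herbrand_iff [Nonempty (Term V Fn)] (α : PAssign V Fn P)
    (ρ : V → Term V Fn) (l : Lit V Fn P) :
    litHolds (Interp.herbrand α) ρ l ↔ litTrue α (l.subst ρ) := by
  have eval_eq (t : Term V Fn) : t.eval (Interp.herbrand α) ρ = t.subst ρ := by
    induction t using Term.induction_on' with
    | var v => rw [Term.eval_var, Term.subst_var]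
    | app f ts ih =>
      rw [Term.eval_app, Term.subst_app]
      exact congrArg _ (List.map_congr_left ih)
  unfold litHolds litTrue
  rw [List.map_congr_left fun t _ => eval_eq t]
  change (l.pol = true ↔ α (l.subst ρ).atom = true) ↔ α (l.subst ρ).atom = l.pol
  cases l.pol <;> simp

theorem satEF_of_instancesSat {α : PAssign V Fn P} {G : Set (Clause V Fn P)}
    (h : InstancesSat α G) : SatEF G := by
  by_cases hne : Nonempty (Term V Fn)
  · refine ⟨Interp.herbrand α, fun D hD ρ => ?_⟩
    obtain ⟨_, hl', hlt⟩ := h D hD ρ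
    obtain ⟨l, hl, rfl⟩ := Multiset.mem_map.1 hl'
    exact ⟨l, hl, (litHolds_herbrand_iff α ρ l).2 hlt⟩
  · -- the Herbrand universe is empty, so no atom has arguments
    have : IsEmpty (Term V Fn) := not_nonempty_iff.1 hne
    refine ⟨⟨PUnit, inferInstance, fun _ _ => (), fun p _ => α ⟨p, []⟩ = true⟩, fun D hD ρ => ?_⟩
    obtain ⟨_, hl', hlt⟩ := h D hD Term.var
    obtain ⟨l, hl, rfl⟩ := Multiset.mem_map.1 hl'
    have args_nil : l.atom.args = [] := List.eq_nil_iff_forall_not_mem.2 fun t _ => isEmptyElim t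
    have hlt' : α ⟨l.atom.pred, []⟩ = l.pol := by
      simpa [litTrue, Lit.subst, Atom.subst, args_nil] using hlt
    refine ⟨l, hl, ?_⟩
    unfold litHolds
    rw [args_nil]
    change l.pol = true ↔ α ⟨l.atom.pred, []⟩ = true
    rw [hlt']

end Semantics

section Clauses

variable {V Fn P : Type}

theorem Lit.subst_subst (σ δ : Subst V Fn) (l : Lit V Fn P) :
    (l.subst σ).subst δ = l.subst (σ.comp δ) := by
  simp [Lit.subst, Atom.subst, Function.comp_def, Term.subst_subst]

theorem Lit.subst_congr {σ τ : Subst V Fn} {l : Lit V Fn P} (h : ∀ v ∈ l.vars, σ v = τ v) :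
    l.subst σ = l.subst τ := by
  simp only [Lit.subst, Atom.subst, Lit.mk.injEq, Atom.mk.injEq, true_and]
  exact List.map_congr_left fun t ht => Term.subst_congr fun v hv => h v ⟨t, ht, hv⟩

@[simp] theorem Lit.compl_compl (l : Lit V Fn P) : l.compl.compl = l := by
  simp [Lit.compl]

theorem Lit.compl_subst (σ : Subst V Fn) (l : Lit V Fn P) :
    l.compl.subst σ = (l.subst σ).compl := rfl

theorem Lit.eq_or_eq_compl_of_atom_eq {l l' : Lit V Fn P} (h : l.atom = l'.atom) :
    l = l' ∨ l = l'.compl := by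
  obtain ⟨p, A⟩ := l
  obtain ⟨p', A'⟩ := l'
  cases p <;> cases p' <;> simp_all [Lit.compl]

theorem Clause.subst_subst (σ δ : Subst V Fn) (C : Clause V Fn P) :
    (C.subst σ).subst δ = C.subst (σ.comp δ) := by
  simp only [Clause.subst, Multiset.map_map]
  exact Multiset.map_congr rfl fun l _ => Lit.subst_subst σ δ l

@[simp] theorem Clause.subst_cons (σ : Subst V Fn) (l : Lit V Fn P) (C : Clause V Fn P) :
    Clause.subst σ (l ::ₘ C) = l.subst σ ::ₘ C.subst σ :=
  Multiset.map_cons _ _ _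

@[simp] theorem Clause.subst_add (σ : Subst V Fn) (C D : Clause V Fn P) :
    Clause.subst σ (C + D) = C.subst σ + D.subst σ :=
  Multiset.map_add _ _ _

theorem Clause.subst_congr {σ τ : Subst V Fn} {C : Clause V Fn P}
    (h : ∀ l ∈ C, l.subst σ = l.subst τ) : C.subst σ = C.subst τ :=
  Multiset.map_congr rfl h

theorem exists_subst_eq_on_disjoint {C D : Clause V Fn P} (h : C.vars ∩ D.vars = ∅)
    (θ γ : Subst V Fn) :
    ∃ τ : Subst V Fn, (∀ l ∈ C, l.subst τ = l.subst θ) ∧ ∀ l ∈ D, l.subst τ = l.subst γ := by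
  classical
  refine ⟨fun v => if v ∈ C.vars then θ v else γ v, fun l hl => ?_, fun l hl => ?_⟩
  all_goals refine Lit.subst_congr fun v hv => ?_
  · simp [show v ∈ C.vars from ⟨l, hl, hv⟩]
  · have : v ∉ C.vars := fun hC => (Set.eq_empty_iff_forall_notMem.1 h) v ⟨hC, l, hl, hv⟩
    simp [this]

theorem Clause.validEF_of_compl_mem {C : Clause V Fn P} {l : Lit V Fn P} (hl : l ∈ C)
    (hl' : l.compl ∈ C) : C.ValidEF := by
  obtain ⟨_ | _, A⟩ := l
  exacts [⟨A, hl', hl⟩, ⟨A, hl, hl'⟩]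

theorem Clause.ValidEF.exists_litTrue_compl_mem {C : Clause V Fn P} (h : C.ValidEF)
    (α : PAssign V Fn P) : ∃ l ∈ C, litTrue α l ∧ l.compl ∈ C := by
  obtain ⟨A, hpos, hneg⟩ := h
  cases hA : α A
  exacts [⟨⟨false, A⟩, hneg, hA, hpos⟩, ⟨⟨true, A⟩, hpos, hA, hneg⟩]

theorem Clause.ValidEF.satC {C : Clause V Fn P} (h : C.ValidEF) (α : PAssign V Fn P) :
    satC α C :=
  let ⟨l, hl, hlt, _⟩ := h.exists_litTrue_compl_mem α
  ⟨l, hl, hlt⟩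

theorem Clause.ValidEF.subst {C : Clause V Fn P} (h : C.ValidEF) (σ : Subst V Fn) :
    (C.subst σ).ValidEF :=
  let ⟨A, hpos, hneg⟩ := h
  ⟨A.subst σ, Multiset.mem_map_of_mem _ hpos, Multiset.mem_map_of_mem _ hneg⟩

end Clauses

section Override

variable {V Fn P : Type}

open Classical in
noncomputable def PAssign.override (α : PAssign V Fn P) (S : Set (Atom V Fn P)) (b : Bool) :
    PAssign V Fn P :=
  fun A => if A ∈ S then b else α A

@[simp] theorem PAssign.override_empty (α : PAssign V Fn P) (b : Bool) :
    α.override ∅ b = α := by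
  funext; simp [override]

theorem PAssign.override_of_mem (α : PAssign V Fn P) (b : Bool) {S : Set (Atom V Fn P)}
    {A : Atom V Fn P} (h : A ∈ S) : α.override S b A = b := by
  unfold override
  rw [if_pos h]

theorem PAssign.override_of_notMem (α : PAssign V Fn P) (b : Bool) {S : Set (Atom V Fn P)}
    {A : Atom V Fn P} (h : A ∉ S) : α.override S b A = α A := by
  unfold override
  rw [if_neg h]

theorem PAssign.override_insert_of_ne (α : PAssign V Fn P) {S : Set (Atom V Fn P)}
    {A B : Atom V Fn P} (b : Bool) (h : B ≠ A) :
    α.override (insert A S) b B = α.override S b B := by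
  unfold override
  split_ifs <;> simp_all

theorem satC_congr {α β : PAssign V Fn P} {X : Clause V Fn P}
    (h : ∀ l ∈ X, α l.atom = β l.atom) : satC α X ↔ satC β X := by
  simp only [satC, litTrue]
  exact exists_congr fun l => and_congr_right fun hl => by rw [h l hl]

theorem satC_override_insert {α : PAssign V Fn P} {S : Set (Atom V Fn P)} {A : Atom V Fn P}
    {b : Bool} {X : Clause V Fn P} (h : satC (α.override S b) X) (hX : ⟨!b, A⟩ ∉ X) :
    satC (α.override (insert A S) b) X := by
  obtain ⟨l, hl, hlt⟩ := h
  refine ⟨l, hl, ?_⟩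
  by_cases hA : l.atom = A
  · have hpol : l.pol = b := by
      by_contra hpol
      exact hX (by rw [← hA, ← Bool.eq_not.2 hpol]; exact hl)
    simp [litTrue, PAssign.override, hA, hpol]
  · rwa [litTrue, α.override_insert_of_ne b hA]

end Override

section Blocking

variable {V Fn P : Type}

theorem BlockedEF.exists_validEF_subst_resolvent {F : Set (Clause V Fn P)} {L : Lit V Fn P}
    {C' D : Clause V Fn P} (hbl : BlockedEF L C' F) (hD : D ∈ F) (hDC : D ≠ L ::ₘ C')
    (hdisj : Clause.vars (L ::ₘ C') ∩ D.vars = ∅) {θ γ : Subst V Fn}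
    (hK : (L.subst θ).compl ∈ D.subst γ) :
    ∃ Drest ≤ D, (L.subst θ).compl ∉ Drest.subst γ ∧ (C'.subst θ + Drest.subst γ).ValidEF := by
  classical
  set K := (L.subst θ).compl
  -- resolve `L` against the literals of `D` whose `γ`-instance is `K`
  set Ns : Clause V Fn P := D.filter (·.subst γ = K)
  set Drest : Clause V Fn P := D.filter (¬ ·.subst γ = K)
  have hNs : Ns ≠ 0 := by
    obtain ⟨N, hN, hNK⟩ := Multiset.mem_map.1 hK
    have hmem : N ∈ Ns := Multiset.mem_filter.2 ⟨hN, hNK⟩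
    exact fun h0 => Multiset.notMem_zero N (h0 ▸ hmem)
  obtain ⟨τ, hτC, hτD⟩ := exists_subst_eq_on_disjoint hdisj θ γ
  have hunif : IsUnifier τ (L :: (Ns.map Lit.compl).toList) := by
    have to_Lθ : ∀ l ∈ L :: (Ns.map Lit.compl).toList, l.subst τ = L.subst θ := by
      simp only [List.mem_cons, Multiset.mem_toList, Multiset.mem_map]
      rintro _ (rfl | ⟨N, hN, rfl⟩)
      · exact hτC _ (Multiset.mem_cons_self _ _)
      · obtain ⟨hND, hNK⟩ := Multiset.mem_filter.1 hN
        rw [Lit.compl_subst, hτD N hND, hNK, Lit.compl_compl]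
    exact fun l₁ h₁ l₂ h₂ => (to_Lθ l₁ h₁).trans (to_Lθ l₂ h₂).symm
  obtain ⟨σ, hσ⟩ := exists_isMGU hunif
  obtain ⟨δ, hδ⟩ := hσ.2 τ hunif
  refine ⟨Drest, Multiset.filter_le _ _, fun hK' => ?_, ?_⟩
  · obtain ⟨N, hN, hNK⟩ := Multiset.mem_map.1 hK'
    exact (Multiset.mem_filter.1 hN).2 hNK
  · have := (hbl D hD hDC Ns Drest (Multiset.filter_add_not _ _) hNs σ hσ).subst δ
    rwa [Clause.subst_add, Clause.subst_subst, Clause.subst_subst, hδ,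
      Clause.subst_congr fun l hl => hτC l (Multiset.mem_cons_of_mem hl),
      Clause.subst_congr fun l hl => hτD l (Multiset.mem_of_mem_filter hl)] at this

theorem instancesSat_override_insert {F : Set (Clause V Fn P)} {L : Lit V Fn P}
    {C' : Clause V Fn P} {α : PAssign V Fn P} {S : Set (Atom V Fn P)} {θ : Subst V Fn}
    (hdisj : ∀ D ∈ F, D ≠ L ::ₘ C' → Clause.vars (L ::ₘ C') ∩ D.vars = ∅)
    (hbl : BlockedEF L C' F)
    (hS : InstancesSat (α.override S L.pol) (F \ {L ::ₘ C'}))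
    (hC : ¬ satC (α.override S L.pol) (Clause.subst θ (L ::ₘ C'))) :
    InstancesSat (α.override (insert (L.subst θ).atom S) L.pol) (F \ {L ::ₘ C'}) := by
  rintro D ⟨hD, hDC : D ≠ L ::ₘ C'⟩ γ
  by_cases hK : (L.subst θ).compl ∉ D.subst γ
  · exact satC_override_insert (hS D ⟨hD, hDC⟩ γ) hK
  obtain ⟨Drest, hle, hKDrest, hR⟩ :=
    hbl.exists_validEF_subst_resolvent hD hDC (hdisj D hD hDC) (not_not.1 hK)
  have hKR : (L.subst θ).compl ∉ C'.subst θ + Drest.subst γ := by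
    rintro hKR
    rcases Multiset.mem_add.1 hKR with hK' | hK'
    · refine hC (Clause.ValidEF.satC ?_ _)
      rw [Clause.subst_cons]
      exact Clause.validEF_of_compl_mem (Multiset.mem_cons_self _ _) (Multiset.mem_cons_of_mem hK')
    · exact hKDrest hK'
  obtain ⟨l, hl, hlt, hlc⟩ := hR.exists_litTrue_compl_mem (α.override S L.pol)
  have hlA : l.atom ≠ (L.subst θ).atom := by
    intro hA
    rcases Lit.eq_or_eq_compl_of_atom_eq hA with rfl | rfl
    exacts [hKR hlc, hKR hl]
  rcases Multiset.mem_add.1 hl with hl | hl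
  · exact absurd ⟨l, by simpa [Clause.subst_cons] using Or.inr hl, hlt⟩ hC
  · refine ⟨l, Multiset.map_subset_map (Multiset.subset_of_le hle) hl, ?_⟩
    rwa [litTrue, α.override_insert_of_ne _ hlA]

end Blocking

section Redundancy

variable {V Fn P : Type}

theorem exists_maximal_override {α : PAssign V Fn P} {G : Set (Clause V Fn P)} (b : Bool)
    (h : InstancesSat α G) : ∃ M, Maximal (fun S => InstancesSat (α.override S b) G) M := by
  have chain_bound : ∀ c ⊆ {S | InstancesSat (α.override S b) G}, IsChain (· ⊆ ·) c →
      c.Nonempty → ∃ ub ∈ {S | InstancesSat (α.override S b) G}, ∀ S ∈ c, S ⊆ ub := by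
    intro c hcG hchain hcne
    refine ⟨⋃₀ c, fun D hD γ => ?_, fun S hS => Set.subset_sUnion_of_mem hS⟩
    -- only the finitely many atoms of `D.subst γ` matter, and one member of the chain covers them
    obtain ⟨S, hSc, hS⟩ := DirectedOn.exists_mem_subset_of_finite_of_subset_sUnion hcne
      hchain.directedOn (((D.subst γ).map Lit.atom).finite_toSet.inter_of_left (⋃₀ c))
      Set.inter_subset_right
    refine (satC_congr fun l hl => ?_).1 (hcG hSc D hD γ)
    by_cases hl' : l.atom ∈ ⋃₀ c
    · rw [PAssign.override_of_mem _ _ hl', PAssign.override_of_mem _ _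
        (hS ⟨Multiset.mem_map_of_mem _ hl, hl'⟩)]
    · rw [PAssign.override_of_notMem _ _ hl', PAssign.override_of_notMem _ _
        fun h => hl' ⟨S, hSc, h⟩]
  obtain ⟨M, -, hM⟩ := zorn_subset_nonempty _ chain_bound ∅ (by simpa using h)
  exact ⟨M, hM⟩

theorem exists_instancesSat_of_blocked {F : Set (Clause V Fn P)} {L : Lit V Fn P}
    {C' : Clause V Fn P} {α : PAssign V Fn P}
    (hdisj : ∀ D ∈ F, D ≠ L ::ₘ C' → Clause.vars (L ::ₘ C') ∩ D.vars = ∅)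
    (hbl : BlockedEF L C' F) (hα : InstancesSat α (F \ {L ::ₘ C'})) :
    ∃ β, InstancesSat β (F ∪ {L ::ₘ C'}) := by
  obtain ⟨M, hM, hmax⟩ := exists_maximal_override L.pol hα
  refine ⟨α.override M L.pol, fun D hD θ => ?_⟩
  by_cases hDC : D = L ::ₘ C'
  · subst hDC
    by_contra hC
    have hA : (L.subst θ).atom ∉ M := fun hA =>
      hC ⟨L.subst θ, by simp, PAssign.override_of_mem _ _ hA⟩
    exact hA (hmax (instancesSat_override_insert hdisj hbl hM hC) (Set.subset_insert _ _)
      (Set.mem_insert _ _))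
  · exact hM D ⟨hD.resolve_right hDC, hDC⟩ θ

end Redundancy

/-- A blocked clause (without equality) is redundant: if `C = L ∨ C'` is blocked by `L` in
`F` (all clauses pairwise variable-disjoint), then `F \ {C}` and `F ∪ {C}` are
satisfiability equivalent. -/
theorem stmt7 {V Fn P : Type} (F : Set (Clause V Fn P)) (L : Lit V Fn P) (C' : Clause V Fn P)
    (hdisj : (F ∪ {L ::ₘ C'}).Pairwise fun D₁ D₂ => Clause.vars D₁ ∩ Clause.vars D₂ = ∅)
    (hbl : BlockedEF L C' F) :
    SatEF (F \ {L ::ₘ C'}) ↔ SatEF (F ∪ {L ::ₘ C'}) := by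
  refine ⟨fun h => ?_, fun ⟨I, hI⟩ => ⟨I, fun D hD => hI D (Or.inl hD.1)⟩⟩
  obtain ⟨α, hα⟩ := h.exists_instancesSat
  have hdisj' : ∀ D ∈ F, D ≠ L ::ₘ C' → Clause.vars (L ::ₘ C') ∩ D.vars = ∅ :=
    fun D hD hDC => hdisj (Or.inr rfl) (Or.inl hD) (Ne.symm hDC)
  obtain ⟨β, hβ⟩ := exists_instancesSat_of_blocked hdisj' hbl hα
  exact satEF_of_instancesSat hβ
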